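/- Let π = σ ∪ ρ as above. If the closure D̄_σ of D_σ under =_ρ is not closed under =_σ (i.e. there exist words r,s ∈ A* with r·s nonempty and u ∈ D_σ such that r·u·s ∈ D̄_σ), then no word containing an element of D_σ as a factor is square-free relative to π; consequently, for every word w square-free relative to π, [w]_π = [w]_ρ. -/

import Mathlib

namespace SqFreePaper

variable {A : Type*}

/-- A word is square-free if it contains no nonempty factor of the form `s ++ s`. -/
def IsSquareFreeWord (w : List A) : Prop :=
  ∀ u s v : List A, w = u ++ s ++ s ++ v → s = []

/-- One-step rewriting relation associated with a system of defining relations `π`. -/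
def OneStep (π : List A → List A → Prop) (x y : List A) : Prop :=
  ∃ r s u v : List A, x = r ++ u ++ s ∧ y = r ++ v ++ s ∧ (π u v ∨ π v u)

/-- The congruence `=_π` generated by `π`: reflexive-transitive closure of one-step rewriting. -/
def EqRel (π : List A → List A → Prop) : List A → List A → Prop :=
  Relation.ReflTransGen (OneStep π)

/-- `w` is square-free relative to `π`: every word in its `=_π`-class is square-free. -/
def SFRel (π : List A → List A → Prop) (w : List A) : Prop :=
  ∀ z, EqRel π w z → IsSquareFreeWord z

/-- Union of two systems of defining relations. -/
def PiRel (σ ρ : List A → List A → Prop) (x y : List A) : Prop := σ x y ∨ ρ x y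

/-- The set of defining words of a system `σ`. -/
def DWords (σ : List A → List A → Prop) : Set (List A) :=
  {x | ∃ y, σ x y ∨ σ y x}

/-- The closure of `D_σ` under the congruence `=_ρ`. -/
def ClosureD (σ ρ : List A → List A → Prop) : Set (List A) :=
  {x | ∃ w ∈ DWords σ, EqRel ρ w x}

/-- The system `{(u_i, u_j) : i < j}` determined by a finite family of words. -/
def FamilyRel {n : ℕ} (u : Fin n → List A) (x y : List A) : Prop :=
  ∃ i j : Fin n, i < j ∧ x = u i ∧ y = u j

/-- `x ~ y` iff both lie in `D̄_σ` or both lie in `D̄_ρ`. -/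
def Sim (σ ρ : List A → List A → Prop) (x y : List A) : Prop :=
  (x ∈ ClosureD σ ρ ∧ y ∈ ClosureD σ ρ) ∨ (x ∈ ClosureD ρ σ ∧ y ∈ ClosureD ρ σ)

/-- `D_τ = D̄_σ ∪ D̄_ρ`. -/
def DTau (σ ρ : List A → List A → Prop) : Set (List A) :=
  ClosureD σ ρ ∪ ClosureD ρ σ

/-- The concatenation `x_a ++ x_{a+1} ++ ⋯ ++ x_{a+len-1}`. -/
def wordSeg (x : ℕ → List A) (a len : ℕ) : List A :=
  ((List.range' a len).map x).flatten

/-- Standing hypotheses of the paper: `D̄_σ`, `D̄_ρ` are finite, nonempty, disjoint,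
and closed under `=_σ`, `=_ρ` respectively. -/
def SettingHyps (σ ρ : List A → List A → Prop) : Prop :=
  (ClosureD σ ρ).Finite ∧ (ClosureD ρ σ).Finite ∧
  (ClosureD σ ρ).Nonempty ∧ (ClosureD ρ σ).Nonempty ∧
  (ClosureD σ ρ ∩ ClosureD ρ σ = ∅) ∧
  (∀ x ∈ ClosureD σ ρ, ∀ y, EqRel σ x y → y ∈ ClosureD σ ρ) ∧
  (∀ x ∈ ClosureD ρ σ, ∀ y, EqRel ρ x y → y ∈ ClosureD ρ σ)

/-- `x_1, …, x_n` (with complementary members `p_i`, `q_i`) is a linear decomposition. -/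
def IsLinDecomp (σ ρ : List A → List A → Prop) (n : ℕ) (x p q : ℕ → List A) : Prop :=
  1 ≤ n ∧
  (∀ i, 1 ≤ i → i ≤ n → x i ≠ []) ∧
  (∃ u v : ℕ → List A,
    (∀ i, 1 < i → i ≤ n → Sim σ ρ (p i ++ x i ++ q i) (q (i-1) ++ u i)) ∧
    (∀ i, 1 ≤ i → i < n → Sim σ ρ (p i ++ x i ++ q i) (v i ++ p (i+1)))) ∧
  (∀ i, 1 ≤ i → i < n → q i = [] ∨ p (i+1) = []) ∧
  p 1 = [] ∧ q n = [] ∧ (n = 1 → x 1 ∈ DTau σ ρ)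

/-- `Lin(n)`: words with a linear decomposition of at most `n` members. -/
def LinSet (σ ρ : List A → List A → Prop) (n : ℕ) : Set (List A) :=
  {w | ∃ m, 1 ≤ m ∧ m ≤ n ∧ ∃ x p q, IsLinDecomp σ ρ m x p q ∧ w = wordSeg x 1 m}

/-- `Lin = ⋃ₙ Lin(n)`: linearly decomposable words. -/
def LinAll (σ ρ : List A → List A → Prop) : Set (List A) :=
  {w | ∃ n, w ∈ LinSet σ ρ n}

/-- Occurrence `(r, d, s)` contains occurrence `(p, e, q)` (of the same word)
iff `|r| ≤ |p|` and `|s| ≤ |q|`. -/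
def Contained (p q r s : List A) : Prop := r.length ≤ p.length ∧ s.length ≤ q.length

/-- Two occurrences in `w` overlap iff some occurrence of a nonempty word is
contained in both. -/
def Overlap (w p q r s : List A) : Prop :=
  ∃ a f b : List A, f ≠ [] ∧ w = a ++ f ++ b ∧ Contained a b p q ∧ Contained a b r s

/-- `(p, e, q)` is a maximal occurrence in `w` of a word `e` in the set `L`. -/
def MaximalOcc (L : Set (List A)) (w p e q : List A) : Prop :=
  w = p ++ e ++ q ∧ e ∈ L ∧
  ∀ r d s, w = r ++ d ++ s → d ∈ L → Contained p q r s → r = p ∧ d = e ∧ s = q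

section Congruence

variable {π π' : List A → List A → Prop} {x y : List A}

theorem EqRel.of_rel_or (h : π x y ∨ π y x) : EqRel π x y :=
  .single ⟨[], [], x, y, by simp, by simp, h⟩

theorem EqRel.append_append (a b : List A) (h : EqRel π x y) :
    EqRel π (a ++ x ++ b) (a ++ y ++ b) := by
  induction h with
  | refl => exact .refl
  | tail _ step ih =>
    obtain ⟨r, s, x', y', rfl, rfl, hrel⟩ := step
    exact ih.tail ⟨a ++ r, s ++ b, x', y', by simp, by simp, hrel⟩

theorem EqRel.mono (hsub : ∀ x y, π x y → π' x y) (h : EqRel π x y) : EqRel π' x y := by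
  induction h with
  | refl => exact .refl
  | tail _ step ih =>
    obtain ⟨r, s, x', y', hx, hy, hrel⟩ := step
    exact ih.tail ⟨r, s, x', y', hx, hy, hrel.imp (hsub _ _) (hsub _ _)⟩

theorem SFRel.of_eqRel (hw : SFRel π x) (h : EqRel π x y) : SFRel π y :=
  fun z hz => hw z (h.trans hz)

end Congruence

theorem eqRel_familyRel_of_mem_dWords {n : ℕ} {u : Fin n → List A} {e e' : List A}
    (he : e ∈ DWords (FamilyRel u)) (he' : e' ∈ DWords (FamilyRel u)) :
    EqRel (FamilyRel u) e e' := by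
  have index : ∀ {e}, e ∈ DWords (FamilyRel u) → ∃ i, e = u i := by
    rintro e ⟨_, ⟨i, _, _, rfl, _⟩ | ⟨_, i, _, _, rfl⟩⟩ <;> exact ⟨i, rfl⟩
  obtain ⟨i, rfl⟩ := index he
  obtain ⟨j, rfl⟩ := index he'
  rcases lt_trichotomy i j with h | rfl | h
  · exact .of_rel_or (.inl ⟨i, j, h, rfl, rfl⟩)
  · exact .refl
  · exact .of_rel_or (.inr ⟨j, i, h, rfl, rfl⟩)

theorem not_isSquareFreeWord_of_ne_nil {r s : List A} (hrs : r ++ s ≠ []) (a d b : List A) :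
    ¬ IsSquareFreeWord (a ++ r ++ r ++ d ++ s ++ s ++ b) := by
  intro hsf
  by_cases hr : r = []
  · subst hr
    exact hrs (hsf (a ++ d) s b (by simp))
  · exact hr (hsf a r (d ++ s ++ s ++ b) (by simp))

/-- Rewrite `e` to `d'`, expand `d'` to `r d s`, then do the same to the inner `d`:
this doubles both `r` and `s`. -/
theorem eqRel_piRel_pump {σ ρ : List A → List A → Prop}
    (hσ : ∀ e ∈ DWords σ, ∀ e' ∈ DWords σ, EqRel σ e e')
    {r s d d' e : List A} (hd : d ∈ DWords σ) (hd' : d' ∈ DWords σ)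
    (hρ : EqRel ρ d' (r ++ d ++ s)) (he : e ∈ DWords σ) (a b : List A) :
    EqRel (PiRel σ ρ) (a ++ e ++ b) (a ++ r ++ r ++ d ++ s ++ s ++ b) := by
  have σ_step : ∀ {x y} (p q : List A), EqRel σ x y →
      EqRel (PiRel σ ρ) (p ++ x ++ q) (p ++ y ++ q) :=
    fun p q h => (h.append_append p q).mono fun _ _ => .inl
  have ρ_step : ∀ {x y} (p q : List A), EqRel ρ x y →
      EqRel (PiRel σ ρ) (p ++ x ++ q) (p ++ y ++ q) :=
    fun p q h => (h.append_append p q).mono fun _ _ => .inr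
  have to_d' := σ_step a b (hσ e he d' hd')
  have expand := ρ_step a b hρ
  have inner_to_d' := σ_step (a ++ r) (s ++ b) (hσ d hd d' hd')
  have expand_again := ρ_step (a ++ r) (s ++ b) hρ
  simp only [List.append_assoc] at *
  exact to_d'.trans (expand.trans (inner_to_d'.trans expand_again))

theorem eqRel_piRel_iff_of_forall_not_infix {σ ρ : List A → List A → Prop} {w z : List A}
    (h : ∀ y, EqRel (PiRel σ ρ) w y → ∀ d ∈ DWords σ, ¬ d <:+: y) :
    EqRel (PiRel σ ρ) w z ↔ EqRel ρ w z := by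
  refine ⟨fun hwz => ?_, EqRel.mono fun _ _ => .inr⟩
  induction hwz with
  | refl => exact .refl
  | @tail y _ hwy step ih =>
    obtain ⟨r, s, x, x', hy, hz, hrel⟩ := step
    have not_σ : ¬ (σ x x' ∨ σ x' x) := fun hσ => h y hwy x ⟨x', hσ⟩ ⟨r, s, hy.symm⟩
    refine ih.tail ⟨r, s, x, x', hy, hz, ?_⟩
    rcases hrel with (h₁ | h₁) | (h₁ | h₁)
    exacts [(not_σ (.inl h₁)).elim, .inl h₁, (not_σ (.inr h₁)).elim, .inr h₁]

theorem not_closed_case_general {A : Type*} {nu : ℕ}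
    (u : Fin nu → List A)
    (σ ρ : List A → List A → Prop) (hσ : σ = FamilyRel u)
    (hnc : ∃ r s d : List A, r ++ s ≠ [] ∧ d ∈ DWords σ ∧ r ++ d ++ s ∈ ClosureD σ ρ) :
    (∀ w : List A, (∃ d ∈ DWords σ, d <:+: w) → ¬ SFRel (PiRel σ ρ) w) ∧
    (∀ w : List A, SFRel (PiRel σ ρ) w →
      {z | EqRel (PiRel σ ρ) w z} = {z | EqRel ρ w z}) := by
  subst hσ
  obtain ⟨r, s, d, hrs, hd, d', hd', hρ⟩ := hnc
  have not_sfRel : ∀ w, (∃ e ∈ DWords (FamilyRel u), e <:+: w) →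
      ¬ SFRel (PiRel (FamilyRel u) ρ) w := by
    rintro w ⟨e, he, a, b, rfl⟩ hsf
    have pump := eqRel_piRel_pump (fun _ h _ h' => eqRel_familyRel_of_mem_dWords h h')
      hd hd' hρ he a b
    exact not_isSquareFreeWord_of_ne_nil hrs a d b (hsf _ pump)
  refine ⟨not_sfRel, fun w hsf => Set.ext fun z => ?_⟩
  exact eqRel_piRel_iff_of_forall_not_infix fun y hy e he hinf =>
    not_sfRel y ⟨e, he, hinf⟩ (hsf.of_eqRel hy)

/-- if `D̄_σ` is not closed under `=_σ`, then no word containing an element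
of `D_σ` as a factor is square-free relative to `π`; consequently `[w]_π = [w]_ρ`
for every `w` square-free relative to `π`. -/
theorem not_closed_case {A : Type*} {nu nv : ℕ}
    (u : Fin nu → List A) (v : Fin nv → List A)
    (hu : Function.Injective u) (hv : Function.Injective v)
    (σ ρ : List A → List A → Prop) (hσ : σ = FamilyRel u) (hρ : ρ = FamilyRel v)
    (hnc : ∃ r s d : List A, r ++ s ≠ [] ∧ d ∈ DWords σ ∧ r ++ d ++ s ∈ ClosureD σ ρ) :
    (∀ w : List A, (∃ d ∈ DWords σ, d <:+: w) → ¬ SFRel (PiRel σ ρ) w) ∧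
    (∀ w : List A, SFRel (PiRel σ ρ) w →
      {z | EqRel (PiRel σ ρ) w z} = {z | EqRel ρ w z}) :=
  not_closed_case_general u σ ρ hσ hnc

end SqFreePaper
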